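/- Let R be a finite ring with identity and let M be a subset of R whose image M̄ in R/J(R) is a maximal independent set of the unit graph of R/J(R) consisting entirely of non-units of R/J(R). Then M + J(R) is a maximal independent set of the unit graph of R, of cardinality |M̄|·|J(R)|. -/

import Mathlib

open Pointwise

/-- The unit graph of a ring: distinct `x, y` adjacent iff `x + y` is a unit. -/
def unitGraph (R : Type*) [Ring R] : SimpleGraph R where
  Adj x y := x ≠ y ∧ IsUnit (x + y)
  symm := by
    constructor
    rintro x y ⟨h1, h2⟩
    exact ⟨h1.symm, by rwa [add_comm]⟩
  loopless := by constructor; rintro x ⟨h, _⟩; exact h rfl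

/-- The unitary Cayley graph of a ring: distinct `x, y` adjacent iff `x - y` is a unit. -/
def cayleyGraph (R : Type*) [Ring R] : SimpleGraph R where
  Adj x y := x ≠ y ∧ IsUnit (x - y)
  symm := by
    constructor
    rintro x y ⟨h1, h2⟩
    refine ⟨h1.symm, ?_⟩
    rw [← neg_sub]
    exact h2.neg
  loopless := by constructor; rintro x ⟨h, _⟩; exact h rfl

/-- A set of vertices is independent if no two of its elements are adjacent. -/
def IsIndepSet {V : Type*} (G : SimpleGraph V) (A : Set V) : Prop :=
  ∀ ⦃x⦄, x ∈ A → ∀ ⦃y⦄, y ∈ A → ¬ G.Adj x y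

/-- A maximal independent set. -/
def IsMaxIndepSet {V : Type*} (G : SimpleGraph V) (A : Set V) : Prop :=
  IsIndepSet G A ∧ ∀ B, IsIndepSet G B → A ⊆ B → A = B

/-- A graph is well-covered if all maximal independent sets have the same cardinality. -/
def WellCovered {V : Type*} (G : SimpleGraph V) : Prop :=
  ∀ A B : Set V, IsMaxIndepSet G A → IsMaxIndepSet G B → A.ncard = B.ncard

/-
Because `ker π = J(R)` and a finite ring is Dedekind-finite, `π` reflects units. So if `x ≠ y`
are adjacent in the unit graph of `R`, then either `π x ≠ π y` are adjacent, or `π x = π y` and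
`π x + π x = 2 * π x` is a unit; as `2` is central, the latter makes `π x` a unit. Hence the
preimage of an independent set of non-units is independent, the image of an independent set is
independent, and maximality of `π '' M` transfers to `π ⁻¹' (π '' M) = M + J(R)`, a union of
`|π '' M|` cosets of `J(R)`.
-/

namespace AddMonoidHom

variable {G H : Type*} [AddGroup G] [AddGroup H] (f : G →+ H)

theorem preimage_image_eq_add_ker (s : Set G) : f ⁻¹' (f '' s) = s + f.ker := by
  have hf : ⇑f = QuotientAddGroup.kerLift f ∘ QuotientAddGroup.mk := rfl
  rw [hf, Set.image_comp, Set.preimage_comp,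
    Set.preimage_image_eq _ (QuotientAddGroup.kerLift_injective f),
    QuotientAddGroup.preimage_image_mk_eq_add]

theorem ncard_preimage_of_surjective (hf : Function.Surjective f) (t : Set H) :
    (f ⁻¹' t).ncard = t.ncard * (f.ker : Set G).ncard := by
  have hf' : ⇑f = QuotientAddGroup.kerLift f ∘ QuotientAddGroup.mk := rfl
  have hlift : Function.Surjective (QuotientAddGroup.kerLift f) := (hf' ▸ hf).of_comp
  rw [hf', Set.preimage_comp, ← Nat.card_coe_set_eq, ← Nat.card_coe_set_eq,
    ← Nat.card_coe_set_eq,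
    Nat.card_congr (QuotientAddGroup.preimageMkEquivAddSubgroupProdSet _ _), Nat.card_prod,
    Nat.card_preimage_of_injective (QuotientAddGroup.kerLift_injective f)
      (by rw [hlift.range_eq]; exact Set.subset_univ t), mul_comm]
  rfl

end AddMonoidHom

theorem isUnit_of_isUnit_add_self {R : Type*} [Ring R] {a : R} (h : IsUnit (a + a)) :
    IsUnit a := by
  rw [← two_mul] at h
  exact ((Commute.ofNat_left 2 a).isUnit_mul_iff.mp h).2

theorem RingHom.isLocalHom_of_ker_le_jacobson {R S : Type*} [Ring R] [IsDedekindFiniteMonoid R]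
    [Ring S] (π : R →+* S) (hπ : Function.Surjective π)
    (hker : RingHom.ker π ≤ Ideal.jacobson ⊥) : IsLocalHom π where
  map_nonunit x := by
    rintro ⟨u, hu⟩
    obtain ⟨y, hy⟩ := hπ ↑u⁻¹
    have hyx : y * x - 1 ∈ Ideal.jacobson ⊥ := hker <| by
      simp [RingHom.mem_ker, hy, ← hu]
    obtain ⟨s, hs⟩ := Ideal.exists_mul_sub_mem_of_sub_one_mem_jacobson _ hyx
    rw [Ideal.mem_bot, sub_eq_zero, ← mul_assoc] at hs
    exact IsUnit.of_mul_eq_one_right _ hs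

section UnitGraph

variable {R S : Type*} [Ring R] [Ring S] (π : R →+* S)

theorem IsIndepSet.image_unitGraph [IsLocalHom π] {B : Set R}
    (hB : IsIndepSet (unitGraph R) B) :
    IsIndepSet (unitGraph S) (π '' B) := by
  rintro _ ⟨x, hx, rfl⟩ _ ⟨y, hy, rfl⟩ ⟨hxy, hunit⟩
  rw [← map_add] at hunit
  exact hB hx hy ⟨fun h ↦ hxy (congrArg π h), isUnit_of_map_unit π _ hunit⟩

theorem IsIndepSet.preimage_unitGraph {N : Set S} (hN : IsIndepSet (unitGraph S) N)
    (hnu : ∀ n ∈ N, ¬ IsUnit n) : IsIndepSet (unitGraph R) (π ⁻¹' N) := by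
  intro x hx y hy ⟨_, hunit⟩
  have hunit' : IsUnit (π x + π y) := map_add π x y ▸ hunit.map π
  by_cases hxy : π x = π y
  · rw [hxy] at hunit'
    exact hnu _ hy (isUnit_of_isUnit_add_self hunit')
  · exact hN hx hy ⟨hxy, hunit'⟩

theorem IsMaxIndepSet.preimage_unitGraph [IsLocalHom π] (hπ : Function.Surjective π) {N : Set S}
    (hN : IsMaxIndepSet (unitGraph S) N) (hnu : ∀ n ∈ N, ¬ IsUnit n) :
    IsMaxIndepSet (unitGraph R) (π ⁻¹' N) := by
  refine ⟨hN.1.preimage_unitGraph π hnu, fun B hB hNB ↦ ?_⟩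
  have hN_sub : N ⊆ π '' B := by
    simpa only [Set.image_preimage_eq N hπ] using Set.image_mono (f := π) hNB
  have hN_eq : N = π '' B := hN.2 _ (hB.image_unitGraph π) hN_sub
  exact hNB.antisymm (hN_eq ▸ Set.subset_preimage_image π B)

end UnitGraph

theorem stmt_9 {R : Type*} [Ring R] [Finite R]
    {S : Type*} [Ring S] (π : R →+* S) (hsurj : Function.Surjective π)
    (hker : RingHom.ker π = Ideal.jacobson (⊥ : Ideal R))
    (M : Set R) (hM : IsMaxIndepSet (unitGraph S) (π '' M))
    (hMnu : ∀ m ∈ π '' M, ¬ IsUnit m) :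
    IsMaxIndepSet (unitGraph R) (M + ((Ideal.jacobson (⊥ : Ideal R) : Ideal R) : Set R)) ∧
      (M + ((Ideal.jacobson (⊥ : Ideal R) : Ideal R) : Set R)).ncard =
        (π '' M).ncard * ((Ideal.jacobson (⊥ : Ideal R) : Ideal R) : Set R).ncard := by
  have hJ : ((Ideal.jacobson (⊥ : Ideal R) : Ideal R) : Set R) = π.toAddMonoidHom.ker := by
    rw [← hker]; rfl
  have : IsLocalHom π := π.isLocalHom_of_ker_le_jacobson hsurj hker.le
  rw [hJ, ← π.toAddMonoidHom.preimage_image_eq_add_ker]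
  exact ⟨hM.preimage_unitGraph π hsurj hMnu,
    π.toAddMonoidHom.ncard_preimage_of_surjective hsurj _⟩
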